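/- arXiv:1209.5050 — 2 statements merged into one kernel-verified Lean document; each statement's English description precedes it below -/
import Mathlib

section
/- Let T be the unilateral weighted right shift on ℓ²(ℕ) with weights satisfying w_1 > w_2 = w_3 = w_4 = ⋯ > 0 and k ≥ 2. Then T is (n,k)-quasi-*-paranormal but not normaloid: ‖T‖ = w_1 while the spectral radius r(T) = w_2 < w_1. -/
/-! Every vector in the range of `T ^ k` with `k ≥ 2` vanishes at the coordinates `0` and `1`,
and on such vectors both `T` and `T*` multiply norms by exactly `w 2`; hence both sides of the
paranormality inequality equal `(w 2 * ‖T ^ k x‖) ^ (n + 1)`. Testing on `e 0` shows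
`‖T ^ (j + 1)‖ = w 1 * w 2 ^ j`, and Gelfand's formula turns this into `r(T) = w 2`. -/

open ContinuousLinearMap Filter Topology
open scoped ENNReal

local notation "ℓ²" => lp (fun _ : ℕ => ℂ) 2

namespace lp

variable {α : Type*} {E : α → Type*} [∀ i, NormedAddCommGroup (E i)]

theorem hasSum_norm_sq (f : lp E 2) : HasSum (fun i => ‖f i‖ ^ 2) (‖f‖ ^ 2) := by
  simpa using lp.hasSum_norm (p := 2) (by norm_num) f

theorem hasSum_norm_sq_succ {E : ℕ → Type*} [∀ i, NormedAddCommGroup (E i)] (f : lp E 2)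
    (h0 : f 0 = 0) : HasSum (fun i => ‖f (i + 1)‖ ^ 2) (‖f‖ ^ 2) := by
  simpa [h0] using (hasSum_nat_add_iff' 1).mpr (hasSum_norm_sq f)

theorem inner_single_one_left {𝕜 ι : Type*} [RCLike 𝕜] [DecidableEq ι] (i : ι)
    (f : lp (fun _ : ι => 𝕜) 2) : inner 𝕜 (lp.single 2 i (1 : 𝕜)) f = f i := by
  simp [lp.inner_single_left]

end lp

theorem eq_mul_of_sq_eq_mul_sq {a b c : ℝ} (ha : 0 ≤ a) (hb : 0 ≤ b) (hc : 0 ≤ c)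
    (h : a ^ 2 = c ^ 2 * b ^ 2) : a = c * b := by
  rwa [← mul_pow, sq_eq_sq₀ ha (by positivity)] at h

/-- `T e_m = w (m + 1) • e (m + 1)`: the paper's weights `w_1, w_2, …` are `w 1, w 2, …`,
and `w 0` is unused. -/
def IsWeightedShift (w : ℕ → ℝ) (T : ℓ² →L[ℂ] ℓ²) : Prop :=
  ∀ m, T (lp.single 2 m 1) = (w (m + 1) : ℂ) • lp.single 2 (m + 1) 1

namespace IsWeightedShift

variable {w : ℕ → ℝ} {T : ℓ² →L[ℂ] ℓ²} (hT : IsWeightedShift w T)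
include hT

theorem hasSum_apply (x : ℓ²) :
    HasSum (fun m => (x m * w (m + 1)) • lp.single 2 (m + 1) (1 : ℂ)) (T x) := by
  convert (lp.hasSum_single (by norm_num) x).mapL T using 2 with m
  rw [← smul_smul, ← hT, ← map_smul, ← lp.single_smul, smul_eq_mul, mul_one]

theorem hasSum_apply_apply (x : ℓ²) (j : ℕ) :
    HasSum (fun m => if j = m + 1 then x m * w (m + 1) else 0) (T x j) := by
  refine ((hT.hasSum_apply x).mapL (lp.evalCLM ℂ (fun _ : ℕ => ℂ) 2 j)).congr_fun fun m => ?_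
  show _ = ((x m * w (m + 1)) • lp.single 2 (m + 1) (1 : ℂ) : ℓ²) j
  simp [lp.single_apply, Pi.single_apply]

theorem apply_zero (x : ℓ²) : T x 0 = 0 :=
  (hT.hasSum_apply_apply x 0).unique (by simp [hasSum_zero])

theorem apply_succ (x : ℓ²) (i : ℕ) : T x (i + 1) = w (i + 1) * x i := by
  rw [mul_comm]
  exact (hT.hasSum_apply_apply x (i + 1)).unique <| by
    simpa using hasSum_single (f := fun m => if i + 1 = m + 1 then x m * (w (m + 1) : ℂ) else 0) i
      fun m hm => if_neg (by omega)

theorem adjoint_apply (y : ℓ²) (i : ℕ) : adjoint T y i = w (i + 1) * y (i + 1) := by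
  rw [← lp.inner_single_one_left, adjoint_inner_right, hT, inner_smul_left,
    lp.inner_single_one_left, Complex.conj_ofReal]

theorem hasSum_norm_sq_apply (x : ℓ²) :
    HasSum (fun i => w (i + 1) ^ 2 * ‖x i‖ ^ 2) (‖T x‖ ^ 2) :=
  (lp.hasSum_norm_sq_succ (T x) (hT.apply_zero x)).congr_fun fun i => by
    rw [hT.apply_succ, norm_mul, Complex.norm_real, Real.norm_eq_abs, mul_pow, sq_abs]

theorem hasSum_norm_sq_adjoint_apply (y : ℓ²) :
    HasSum (fun i => w (i + 1) ^ 2 * ‖y (i + 1)‖ ^ 2) (‖adjoint T y‖ ^ 2) :=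
  (lp.hasSum_norm_sq (adjoint T y)).congr_fun fun i => by
    rw [hT.adjoint_apply, norm_mul, Complex.norm_real, Real.norm_eq_abs, mul_pow, sq_abs]

theorem opNorm_le {C : ℝ} (hC : ∀ i, |w (i + 1)| ≤ C) : ‖T‖ ≤ C := by
  have hC₀ : 0 ≤ C := (abs_nonneg _).trans (hC 0)
  refine T.opNorm_le_bound hC₀ fun x => pow_le_pow_iff_left₀ (norm_nonneg _) (by positivity)
    two_ne_zero |>.mp ?_
  rw [mul_pow]
  refine hasSum_le (fun i => ?_) (hT.hasSum_norm_sq_apply x) ((lp.hasSum_norm_sq x).mul_left _)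
  exact mul_le_mul_of_nonneg_right (sq_le_sq.mpr ((hC i).trans (le_abs_self C))) (by positivity)

theorem pow_apply_single_zero (m : ℕ) :
    (T ^ m) (lp.single 2 0 1) =
      ((∏ i ∈ Finset.range m, w (i + 1) : ℝ) : ℂ) • lp.single 2 m 1 := by
  induction m with
  | zero => simp
  | succ m ih =>
    rw [pow_succ', mul_apply_eq_comp, ih, map_smul, hT, smul_smul, Finset.prod_range_succ]
    push_cast
    rfl

theorem abs_prod_le_norm_pow (m : ℕ) : ∏ i ∈ Finset.range m, |w (i + 1)| ≤ ‖T ^ m‖ := by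
  simpa [hT.pow_apply_single_zero, norm_smul, lp.norm_single] using
    (T ^ m).le_opNorm (lp.single 2 0 1)

theorem pow_apply_of_lt {i k : ℕ} (hik : i < k) (x : ℓ²) : (T ^ k) x i = 0 := by
  induction k generalizing i with
  | zero => omega
  | succ k ih =>
    rw [pow_succ', mul_apply_eq_comp]
    cases i with
    | zero => exact hT.apply_zero _
    | succ i => rw [hT.apply_succ, ih (by omega), mul_zero]

section EventuallyConstant

variable (hwc : ∀ m, 2 ≤ m → w m = w 2) (hw₂ : 0 ≤ w 2)
include hwc hw₂

theorem norm_apply_of_apply_zero {x : ℓ²} (hx : x 0 = 0) : ‖T x‖ = w 2 * ‖x‖ := by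
  refine eq_mul_of_sq_eq_mul_sq (norm_nonneg _) (norm_nonneg _) hw₂ <|
    (hT.hasSum_norm_sq_apply x).unique <| ((lp.hasSum_norm_sq x).mul_left _).congr_fun fun i => ?_
  cases i with
  | zero => simp [hx]
  | succ i => rw [hwc _ (by omega)]

theorem norm_pow_apply_of_apply_zero (j : ℕ) {x : ℓ²} (hx : x 0 = 0) :
    ‖(T ^ j) x‖ = w 2 ^ j * ‖x‖ := by
  induction j generalizing x with
  | zero => simp
  | succ j ih =>
    rw [pow_succ, mul_apply_eq_comp, ih (hT.apply_zero x),
      hT.norm_apply_of_apply_zero hwc hw₂ hx, pow_succ, mul_assoc]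

theorem norm_adjoint_apply_of_apply_zero_of_apply_one {y : ℓ²} (hy₀ : y 0 = 0)
    (hy₁ : y 1 = 0) :
    ‖adjoint T y‖ = w 2 * ‖y‖ := by
  refine eq_mul_of_sq_eq_mul_sq (norm_nonneg _) (norm_nonneg _) hw₂ <|
    (hT.hasSum_norm_sq_adjoint_apply y).unique <|
      ((lp.hasSum_norm_sq_succ y hy₀).mul_left _).congr_fun fun i => ?_
  cases i with
  | zero => simp [hy₁]
  | succ i => rw [hwc _ (by omega)]

theorem norm_pow_succ (hw₁₂ : w 2 ≤ w 1) (j : ℕ) : ‖T ^ (j + 1)‖ = w 1 * w 2 ^ j := by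
  have hw₁ : 0 ≤ w 1 := hw₂.trans hw₁₂
  have hweights : ∀ i, |w (i + 1)| ≤ w 1 := by
    rintro (_ | i)
    · exact (abs_of_nonneg hw₁).le
    · rwa [hwc _ (by omega), abs_of_nonneg hw₂]
  refine le_antisymm (opNorm_le_bound _ (by positivity) fun x => ?_) ?_
  · calc ‖(T ^ (j + 1)) x‖ = w 2 ^ j * ‖T x‖ := by
          rw [pow_succ, mul_apply_eq_comp,
            hT.norm_pow_apply_of_apply_zero hwc hw₂ j (hT.apply_zero x)]
      _ ≤ w 2 ^ j * (w 1 * ‖x‖) := by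
          gcongr
          exact T.le_of_opNorm_le (hT.opNorm_le hweights) x
      _ = w 1 * w 2 ^ j * ‖x‖ := by ring
  · have hprod : ∏ i ∈ Finset.range (j + 1), |w (i + 1)| = w 1 * w 2 ^ j := by
      rw [Finset.prod_range_succ', mul_comm, abs_of_nonneg hw₁,
        Finset.prod_congr rfl fun i _ => by rw [hwc (i + 1 + 1) (by omega), abs_of_nonneg hw₂],
        Finset.prod_const, Finset.card_range]
    exact hprod ▸ hT.abs_prod_le_norm_pow (j + 1)

end EventuallyConstant

end IsWeightedShift

theorem spectralRadius_eq_of_norm_pow_succ {A : Type*} [NormedRing A] [NormedAlgebra ℂ A]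
    [CompleteSpace A] {a : A} {C r : ℝ} (hC : 0 < C) (hr : 0 < r)
    (h : ∀ j, ‖a ^ (j + 1)‖ = C * r ^ j) : spectralRadius ℂ a = ENNReal.ofReal r := by
  refine tendsto_nhds_unique ((tendsto_add_atTop_iff_nat 1).mpr
    (spectrum.pow_norm_pow_one_div_tendsto_nhds_spectralRadius a)) (ENNReal.tendsto_ofReal ?_)
  have hroot : Tendsto (fun j : ℕ => (C / r) ^ (1 / ((j : ℝ) + 1))) atTop (𝓝 1) := by
    simpa [Function.comp_def] using
      (Real.continuousAt_const_rpow (div_pos hC hr).ne').tendsto.comp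
        tendsto_one_div_add_atTop_nhds_zero_nat
  refine (one_mul r ▸ hroot.mul_const r).congr fun j => ?_
  have hCr : C * r ^ j = C / r * r ^ (j + 1) := by
    field_simp
    ring
  rw [h, hCr, Real.mul_rpow (by positivity) (by positivity), one_div ((j + 1 : ℕ) : ℝ),
    Real.pow_rpow_inv_natCast hr.le (by omega), Nat.cast_add_one, one_div]

/-- Let `T` be the unilateral weighted right shift with weights `w_1 > w_2 = w_3 = ⋯ > 0`
and let `k ≥ 2`. Then `T` is `(n,k)`-quasi-*-paranormal, yet `T` is not normaloid:
`‖T‖ = w_1` while the spectral radius of `T` equals `w_2 < w_1`. -/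
theorem stmt_7 (n k : ℕ) (hk : 2 ≤ k) (w : ℕ → ℝ)
    (hw2 : 0 < w 2) (hw12 : w 2 < w 1) (hwc : ∀ m : ℕ, 2 ≤ m → w m = w 2)
    (T : lp (fun _ : ℕ => ℂ) 2 →L[ℂ] lp (fun _ : ℕ => ℂ) 2)
    (hT : ∀ m : ℕ, T (lp.single 2 m (1 : ℂ)) = (w (m + 1) : ℂ) • lp.single 2 (m + 1) (1 : ℂ)) :
    (∀ x : lp (fun _ : ℕ => ℂ) 2, ‖adjoint T (T ^ k <| x)‖ ^ (n + 1) ≤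
        ‖T ^ (n + 1) <| T ^ k <| x‖ * ‖T ^ k <| x‖ ^ n)
      ∧ ‖T‖ = w 1 ∧ spectralRadius ℂ T = ENNReal.ofReal (w 2) := by
  have hshift : IsWeightedShift w T := hT
  have hnorm_pow := hshift.norm_pow_succ hwc hw2.le hw12.le
  refine ⟨fun x => ?_, by simpa using hnorm_pow 0,
    spectralRadius_eq_of_norm_pow_succ (hw2.trans hw12) hw2 hnorm_pow⟩
  have hy₀ : (T ^ k) x 0 = 0 := hshift.pow_apply_of_lt (by omega) x
  have hy₁ : (T ^ k) x 1 = 0 := hshift.pow_apply_of_lt (by omega) x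
  rw [hshift.norm_adjoint_apply_of_apply_zero_of_apply_one hwc hw2.le hy₀ hy₁,
    hshift.norm_pow_apply_of_apply_zero hwc hw2.le _ hy₀]
  exact le_of_eq (by ring)
end

section
/- Let T be (n,k)-quasi-*-paranormal and λ ≠ 0. If (x_m) is a sequence of unit vectors with (T − λ)x_m → 0, then (T* − conj(λ))x_m → 0. -/
/-!
An approximate eigenvector for `λ` is one for every power: `(T^j - λ^j) x_m → 0`, hence
`‖T^j x_m‖ → |λ|^j`. Feeding this into the paranormality inequality at `T^k x_m` gives
`limsup ‖T* T^k x_m‖ ≤ |λ|^(k+1)`, and as `T^k x_m ≈ λ^k x_m` with `λ ≠ 0`, `limsup ‖T* x_m‖ ≤ |λ|`.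
Since `⟪x_m, T* x_m⟫ = conj ⟪x_m, T x_m⟫ → conj λ`, expanding
`‖T* x_m - conj λ x_m‖² = ‖T* x_m‖² - 2 Re (λ ⟪x_m, T* x_m⟫) + |λ|²` shows it tends to `0`.
-/

open ContinuousLinearMap Filter Topology
open scoped InnerProductSpace ComplexConjugate

section

variable {ι 𝕜 R E F : Type*} {l : Filter ι}

theorem tendsto_pow_apply_sub_pow_smul [CommRing R] [AddCommGroup E] [Module R E]
    [TopologicalSpace E] [IsTopologicalAddGroup E] [ContinuousConstSMul R E]
    {T : E →L[R] E} {c : R} {x : ι → E} (h : Tendsto (fun m => T (x m) - c • x m) l (𝓝 0))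
    (j : ℕ) : Tendsto (fun m => (T ^ j) (x m) - c ^ j • x m) l (𝓝 0) := by
  induction j with
  | zero => simpa using tendsto_const_nhds
  | succ j ih =>
    have hlim := ((T.continuous.tendsto 0).comp ih).add (h.const_smul (c ^ j))
    rw [map_zero, smul_zero, add_zero] at hlim
    refine hlim.congr fun m => ?_
    -- `T^(j+1) x - c^(j+1) x = T (T^j x - c^j x) + c^j (T x - c x)`
    simp only [Function.comp_apply, map_sub, map_smul, pow_succ', mul_apply_eq_comp]
    module

section Normed

variable [SeminormedAddCommGroup E]

theorem tendsto_norm_of_tendsto_sub_smul [NormedField 𝕜] [NormedSpace 𝕜 E] {x y : ι → E} {c : 𝕜}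
    (hx : ∀ m, ‖x m‖ = 1)
    (h : Tendsto (fun m => y m - c • x m) l (𝓝 0)) : Tendsto (fun m => ‖y m‖) l (𝓝 ‖c‖) := by
  rw [tendsto_iff_norm_sub_tendsto_zero]
  refine squeeze_zero (fun _ => norm_nonneg _) (fun m => ?_) (by simpa using h.norm)
  rw [Real.norm_eq_abs, ← mul_one ‖c‖, ← hx m, ← norm_smul]
  exact abs_norm_sub_norm_le _ _

theorem norm_smul_mul_norm_apply_le [NontriviallyNormedField 𝕜] [NormedSpace 𝕜 E]
    [SeminormedAddCommGroup F] [NormedSpace 𝕜 F]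
    (A : E →L[𝕜] F) (c : 𝕜) (x y : E) : ‖c‖ * ‖A x‖ ≤ ‖A y‖ + ‖A‖ * ‖y - c • x‖ :=
  calc ‖c‖ * ‖A x‖ = ‖A y - A (y - c • x)‖ := by
        rw [← norm_smul, ← map_smul, ← map_sub, sub_sub_cancel]
    _ ≤ ‖A y‖ + ‖A (y - c • x)‖ := norm_sub_le _ _
    _ ≤ ‖A y‖ + ‖A‖ * ‖y - c • x‖ := by gcongr; exact A.le_opNorm _

end Normed

section Inner

variable [RCLike 𝕜] [NormedAddCommGroup E] [InnerProductSpace 𝕜 E] {x y : ι → E} {μ : 𝕜}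

theorem tendsto_inner_of_tendsto_sub_smul (hx : ∀ m, ‖x m‖ = 1)
    (h : Tendsto (fun m => y m - μ • x m) l (𝓝 0)) :
    Tendsto (fun m => ⟪x m, y m⟫_𝕜) l (𝓝 μ) := by
  have hdecomp : ∀ m, ⟪x m, y m⟫_𝕜 = ⟪x m, y m - μ • x m⟫_𝕜 + μ := fun m => by
    rw [inner_sub_right, inner_smul_right, inner_self_eq_norm_sq_to_K, hx m]
    simp
  have hsmall : Tendsto (fun m => ⟪x m, y m - μ • x m⟫_𝕜) l (𝓝 0) := by
    rw [tendsto_zero_iff_norm_tendsto_zero]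
    refine squeeze_zero (fun _ => norm_nonneg _) (fun m => ?_) (by simpa using h.norm)
    simpa [hx m] using norm_inner_le_norm (𝕜 := 𝕜) (x m) (y m - μ • x m)
  simpa only [zero_add, ← hdecomp] using hsmall.add_const μ

theorem tendsto_sub_smul_of_tendsto_inner (hx : ∀ m, ‖x m‖ = 1)
    (hinner : Tendsto (fun m => ⟪x m, y m⟫_𝕜) l (𝓝 μ)) {s : ι → ℝ} (hy : ∀ m, ‖y m‖ ≤ s m)
    (hs : Tendsto s l (𝓝 ‖μ‖)) : Tendsto (fun m => y m - μ • x m) l (𝓝 0) := by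
  have hsq (m : ι) :
      ‖μ • x m - y m‖ ^ 2 = ‖μ‖ ^ 2 - 2 * RCLike.re (conj μ * ⟪x m, y m⟫_𝕜) + ‖y m‖ ^ 2 := by
    rw [@norm_sub_sq 𝕜, inner_smul_left, norm_smul, hx m, mul_one]
  have hbound (m : ι) : ‖μ • x m - y m‖ ^ 2 ≤
      ‖μ‖ ^ 2 - 2 * RCLike.re (conj μ * ⟪x m, y m⟫_𝕜) + s m ^ 2 := by
    rw [hsq m]
    gcongr
    exact hy m
  have hlim : Tendsto (fun m => ‖μ‖ ^ 2 - 2 * RCLike.re (conj μ * ⟪x m, y m⟫_𝕜) + s m ^ 2) l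
      (𝓝 0) := by
    have hre := (RCLike.continuous_re.tendsto _).comp (hinner.const_mul (conj μ))
    have hzero : ‖μ‖ ^ 2 - 2 * RCLike.re (conj μ * μ) + ‖μ‖ ^ 2 = 0 := by
      rw [RCLike.conj_mul, ← RCLike.ofReal_pow, RCLike.ofReal_re]
      ring
    rw [← hzero]
    exact ((hre.const_mul 2).const_sub (‖μ‖ ^ 2)).add (hs.pow 2)
  have hnorm_sq := (squeeze_zero (fun _ => by positivity) hbound hlim).sqrt
  rw [Real.sqrt_zero] at hnorm_sq
  rw [tendsto_zero_iff_norm_tendsto_zero]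
  simpa only [Real.sqrt_sq (norm_nonneg _), norm_sub_rev] using hnorm_sq

end Inner

section QuasiStarParanormal

variable [RCLike 𝕜] [NormedAddCommGroup E] [InnerProductSpace 𝕜 E] [CompleteSpace E]

def IsQuasiStarParanormal (n k : ℕ) (T : E →L[𝕜] E) : Prop :=
  ∀ x : E, ‖adjoint T ((T ^ k) x)‖ ^ (n + 1) ≤ ‖(T ^ (n + 1)) ((T ^ k) x)‖ * ‖(T ^ k) x‖ ^ n

variable {n k : ℕ} {T : E →L[𝕜] E}

theorem IsQuasiStarParanormal.norm_adjoint_pow_apply_le (hT : IsQuasiStarParanormal n k T)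
    (x : E) : ‖adjoint T ((T ^ k) x)‖ ≤
      (‖(T ^ (n + 1 + k)) x‖ * ‖(T ^ k) x‖ ^ n) ^ ((↑(n + 1) : ℝ)⁻¹) := by
  rw [Real.le_rpow_inv_iff_of_pos (norm_nonneg _) (by positivity) (by positivity),
    Real.rpow_natCast, pow_add T, mul_apply_eq_comp]
  exact hT x

theorem IsQuasiStarParanormal.exists_norm_adjoint_le (hT : IsQuasiStarParanormal n k T)
    {lam : 𝕜} (hlam : lam ≠ 0) {x : ι → E} (hx : ∀ m, ‖x m‖ = 1)
    (h : Tendsto (fun m => T (x m) - lam • x m) l (𝓝 0)) :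
    ∃ s : ι → ℝ, Tendsto s l (𝓝 ‖lam‖) ∧ ∀ m, ‖adjoint T (x m)‖ ≤ s m := by
  have hpow (j : ℕ) : Tendsto (fun m => ‖(T ^ j) (x m)‖) l (𝓝 (‖lam‖ ^ j)) := by
    simpa using tendsto_norm_of_tendsto_sub_smul hx (tendsto_pow_apply_sub_pow_smul h j)
  set ρ : ι → ℝ := fun m =>
    (‖(T ^ (n + 1 + k)) (x m)‖ * ‖(T ^ k) (x m)‖ ^ n) ^ ((↑(n + 1) : ℝ)⁻¹)
  have hρ : Tendsto ρ l (𝓝 (‖lam‖ ^ (k + 1))) := by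
    have hprod := ((hpow (n + 1 + k)).mul ((hpow k).pow n)).rpow_const
      (p := (↑(n + 1) : ℝ)⁻¹) (Or.inr (by positivity))
    rwa [← pow_mul, ← pow_add, show n + 1 + k + k * n = (k + 1) * (n + 1) by ring, pow_mul,
      Real.pow_rpow_inv_natCast (by positivity) n.succ_ne_zero] at hprod
  have he := (tendsto_pow_apply_sub_pow_smul h k).norm
  rw [norm_zero] at he
  refine ⟨fun m => (ρ m + ‖adjoint T‖ * ‖(T ^ k) (x m) - lam ^ k • x m‖) / ‖lam‖ ^ k, ?_,
    fun m => ?_⟩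
  · convert (hρ.add (he.const_mul _)).div_const (‖lam‖ ^ k) using 2
    field_simp
    ring
  · rw [le_div_iff₀ (by positivity), mul_comm, ← norm_pow]
    exact (norm_smul_mul_norm_apply_le _ _ _ _).trans
      (by gcongr; exact hT.norm_adjoint_pow_apply_le (x m))

end QuasiStarParanormal

end

/-- If `T` is `(n,k)`-quasi-*-paranormal, `λ ≠ 0`, and `(x_m)` is a sequence of unit vectors with
`(T - λ) x_m → 0`, then `(T* - conj λ) x_m → 0`. -/
theorem stmt_13 {H : Type*} [NormedAddCommGroup H] [InnerProductSpace ℂ H] [CompleteSpace H]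
    (T : H →L[ℂ] H) (n k : ℕ)
    (hT : ∀ x : H, ‖adjoint T (T ^ k <| x)‖ ^ (n + 1) ≤
      ‖T ^ (n + 1) <| T ^ k <| x‖ * ‖T ^ k <| x‖ ^ n)
    (lam : ℂ) (hlam : lam ≠ 0)
    (x : ℕ → H) (hx : ∀ m, ‖x m‖ = 1)
    (hconv : Tendsto (fun m => T (x m) - lam • x m) atTop (nhds 0)) :
    Tendsto (fun m => adjoint T (x m) - (starRingEnd ℂ lam) • x m) atTop (nhds 0) := by
  obtain ⟨s, hs, hle⟩ := IsQuasiStarParanormal.exists_norm_adjoint_le hT hlam hx hconv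
  have hinner : Tendsto (fun m => ⟪x m, adjoint T (x m)⟫_ℂ) atTop (𝓝 (conj lam)) := by
    refine ((Complex.continuous_conj.tendsto lam).comp
      (tendsto_inner_of_tendsto_sub_smul hx hconv)).congr fun m => ?_
    rw [adjoint_inner_right]
    exact inner_conj_symm _ _
  exact tendsto_sub_smul_of_tendsto_inner hx hinner hle (by rwa [RCLike.norm_conj])
end
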